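/- arXiv:1702.07243 — 4 statements merged into one kernel-verified Lean document; each statement's English description precedes it below -/
import Mathlib

section
/- Sylvester's determinant identity: for an n×n matrix A over a commutative domain R, and integers 0 ≤ k < s ≤ n, the determinant of the (s−k)×(s−k) matrix of minors 𝒜_s^k = (α^{k+1}_{i,j})_{k+1≤i,j≤s} equals α^s · (α^k)^{s−k−1}, where α^k_{i,j} denotes the k×k minor of A on rows 1,…,k−1,i and columns 1,…,k−1,j, α^k = α^k_{k,k}, and α^0 = 1. -/
/-!
For a block matrix `M = [[E, F], [G, H]]`, multiplying on the left by
`[[1, 0], [-G adj(E), det E • 1]]` gives `(det E)^|H| * det M = det E * det (det E • H - G adj(E) F)`.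
When `det E` is not a zero divisor this yields `det (det E • H - G adj(E) F) = (det E)^(|H|-1) * det M`;
in general replace `E` by `X • 1 + E` over `R[X]`, whose determinant is monic, and evaluate at `X = 0`.
With `|H| = 1` this identifies the bordered minor `α^{k+1}_{i,j}` with the `(i, j)` entry of
`det E • A - G adj(E) F`, where `E` is the leading `k × k` block. So `𝒜_s^k = det E • H - G adj(E) F`
for the splitting of the leading `s × s` block with `|H| = s - k`, and the block identity concludes.
-/

open Matrix

/-- `mnr A k i j` is the `k×k` minor of `A` on rows `1,…,k−1,i` and columns
`1,…,k−1,j` (positions are 1-indexed; `i j` are 0-indexed `Fin` values).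
For `k = 0` this is the empty determinant `1`. -/
def mnr {R : Type*} [CommRing R] {n m : ℕ} (A : Matrix (Fin n) (Fin m) R) (k : ℕ)
    (i : Fin n) (j : Fin m) : R :=
  Matrix.det (Matrix.of fun a b : Fin k =>
    A (if h : a.val < k - 1 ∧ a.val < n then ⟨a.val, h.2⟩ else i)
      (if h : b.val < k - 1 ∧ b.val < m then ⟨b.val, h.2⟩ else j))

/-- `lead A k` is the leading principal `k×k` minor `α^k` of `A`, with `α^0 = 1`. -/
def lead {R : Type*} [CommRing R] {n m : ℕ} (A : Matrix (Fin n) (Fin m) R) (k : ℕ) : R :=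
  if h : 0 < k ∧ k ≤ n ∧ k ≤ m then
    mnr A k ⟨k - 1, by omega⟩ ⟨k - 1, by omega⟩ else 1

namespace Matrix

open Polynomial

variable {m n R : Type*} [Fintype m] [Fintype n] [DecidableEq m] [DecidableEq n] [CommRing R]

theorem det_pow_mul_det_fromBlocks (E : Matrix m m R) (F : Matrix m n R) (G : Matrix n m R)
    (H : Matrix n n R) :
    E.det ^ Fintype.card n * (fromBlocks E F G H).det =
      E.det * (E.det • H - G * E.adjugate * F).det := by
  have hL : (fromBlocks 1 0 (-(G * E.adjugate)) (E.det • 1)).det = E.det ^ Fintype.card n := by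
    rw [det_fromBlocks_zero₁₂, det_one, det_smul, det_one, one_mul, mul_one]
  have hLM : fromBlocks 1 0 (-(G * E.adjugate)) (E.det • 1) * fromBlocks E F G H =
      fromBlocks E F 0 (E.det • H - G * E.adjugate * F) := by
    rw [fromBlocks_multiply, Matrix.neg_mul, Matrix.mul_assoc, adjugate_mul]
    simp [sub_eq_neg_add]
  rw [← hL, ← det_mul, hLM, det_fromBlocks_zero₂₁]

theorem det_smul_sub_mul_adjugate_mul_of_isLeftRegular {E : Matrix m m R}
    (hE : IsLeftRegular E.det) (F : Matrix m n R) (G : Matrix n m R) (H : Matrix n n R)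
    (hn : Fintype.card n ≠ 0) :
    (E.det • H - G * E.adjugate * F).det =
      E.det ^ (Fintype.card n - 1) * (fromBlocks E F G H).det := by
  apply hE
  dsimp only
  rw [← det_pow_mul_det_fromBlocks, ← mul_assoc, ← pow_succ', Nat.sub_add_cancel (by omega)]

theorem det_smul_sub_mul_adjugate_mul (E : Matrix m m R) (F : Matrix m n R) (G : Matrix n m R)
    (H : Matrix n n R) (hn : Fintype.card n ≠ 0) :
    (E.det • H - G * E.adjugate * F).det =
      E.det ^ (Fintype.card n - 1) * (fromBlocks E F G H).det := by
  set EX : Matrix m m R[X] := (X : R[X]) • 1 + E.map C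
  have hEX : IsLeftRegular EX.det :=
    (Monic.isRegular (leadingCoeff_det_X_one_add_C E)).left
  have hEX_eval : EX.map (evalRingHom 0) = E := by
    ext i j
    by_cases h : i = j <;> simp [EX, h]
  have hadj : EX.adjugate.map (evalRingHom 0) = E.adjugate := by
    rw [← RingHom.mapMatrix_apply, RingHom.map_adjugate, RingHom.mapMatrix_apply, hEX_eval]
  have hdet : evalRingHom 0 EX.det = E.det := by
    rw [RingHom.map_det, RingHom.mapMatrix_apply, hEX_eval]
  have hC : ⇑(evalRingHom (0 : R)) ∘ ⇑C = id := funext fun _ => eval_C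
  have key := congrArg (evalRingHom 0)
    (det_smul_sub_mul_adjugate_mul_of_isLeftRegular hEX (F.map C) (G.map C) (H.map C) hn)
  rw [map_mul, map_pow, hdet, RingHom.map_det, RingHom.map_det] at key
  simp only [RingHom.mapMatrix_apply] at key
  rwa [Matrix.map_sub _ (map_sub (evalRingHom 0)), Matrix.map_mul, Matrix.map_mul,
    Matrix.map_smul' _ _ _ (map_mul (evalRingHom 0)), hadj, hdet, fromBlocks_map, hEX_eval,
    Matrix.map_map, Matrix.map_map, Matrix.map_map, hC, Matrix.map_id, Matrix.map_id,
    Matrix.map_id] at key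

theorem det_fromBlocks_of_unique [Unique n] (E : Matrix m m R) (F : Matrix m n R)
    (G : Matrix n m R) (H : Matrix n n R) :
    (fromBlocks E F G H).det = E.det * H default default - (G * E.adjugate * F) default default := by
  simpa [det_unique] using (det_smul_sub_mul_adjugate_mul E F G H (by simp)).symm

end Matrix

section Minors

variable {R : Type*} [CommRing R] {n m : ℕ}

theorem lead_eq_det_submatrix (A : Matrix (Fin n) (Fin m) R) {k : ℕ} (hn : k ≤ n) (hm : k ≤ m) :
    lead A k = (A.submatrix (Fin.castLE hn) (Fin.castLE hm)).det := by
  rcases Nat.eq_zero_or_pos k with rfl | hk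
  · simp [lead]
  rw [lead, dif_pos ⟨hk, hn, hm⟩, mnr]
  congr 1
  ext a b
  simp only [of_apply, submatrix_apply]
  congr 1 <;> split_ifs <;> ext <;> simp only [Fin.val_castLE] <;> omega

theorem mnr_succ (A : Matrix (Fin n) (Fin m) R) {k : ℕ} (hn : k ≤ n) (hm : k ≤ m)
    (i : Fin n) (j : Fin m) :
    mnr A (k + 1) i j =
      ((A.submatrix (Fin.castLE hn) (Fin.castLE hm)).det • A -
        A.submatrix id (Fin.castLE hm) * (A.submatrix (Fin.castLE hn) (Fin.castLE hm)).adjugate *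
          A.submatrix (Fin.castLE hn) id) i j := by
  set E := A.submatrix (Fin.castLE hn) (Fin.castLE hm)
  have hborder : mnr A (k + 1) i j = (fromBlocks E (of fun x (_ : Fin 1) => A (Fin.castLE hn x) j)
      (of fun _ y => A i (Fin.castLE hm y)) (of fun _ _ => A i j)).det := by
    rw [mnr, ← det_submatrix_equiv_self finSumFinEquiv]
    congr 1
    ext (x | x) (y | y) <;>
      simp only [E, submatrix_apply, of_apply, fromBlocks_apply₁₁, fromBlocks_apply₁₂,
        fromBlocks_apply₂₁, fromBlocks_apply₂₂, finSumFinEquiv_apply_left,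
        finSumFinEquiv_apply_right, Fin.val_castAdd, Fin.val_natAdd] <;>
      congr 1 <;> split_ifs <;> first | rfl | omega
  rw [hborder, Matrix.det_fromBlocks_of_unique]
  simp [Matrix.mul_apply, E]

end Minors

/-- Sylvester's determinant identity. -/
theorem sylvester_determinant_identity {R : Type*} [CommRing R] {n : ℕ}
    (A : Matrix (Fin n) (Fin n) R) (k s : ℕ) (hks : k < s) (hsn : s ≤ n) :
    Matrix.det (Matrix.of fun a b : Fin (s - k) =>
        mnr A (k + 1) ⟨k + a.val, by omega⟩ ⟨k + b.val, by omega⟩) =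
      lead A s * (lead A k) ^ (s - k - 1) := by
  have hkn : k ≤ n := by omega
  set E := A.submatrix (Fin.castLE hkn) (Fin.castLE hkn)
  let tail : Fin (s - k) → Fin n := fun a => ⟨k + a.val, by omega⟩
  have hminors : (of fun a b : Fin (s - k) => mnr A (k + 1) (tail a) (tail b)) =
      E.det • A.submatrix tail tail -
        A.submatrix tail (Fin.castLE hkn) * E.adjugate * A.submatrix (Fin.castLE hkn) tail := by
    ext a b
    simp [mnr_succ A hkn hkn, Matrix.mul_apply, E]
  let e : Fin k ⊕ Fin (s - k) ≃ Fin s := finSumFinEquiv.trans (finCongr (by omega))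
  have hblocks : (A.submatrix (Fin.castLE hsn) (Fin.castLE hsn)).submatrix e e =
      fromBlocks E (A.submatrix (Fin.castLE hkn) tail) (A.submatrix tail (Fin.castLE hkn))
        (A.submatrix tail tail) := by
    ext (x | x) (y | y) <;> rfl
  rw [hminors, det_smul_sub_mul_adjugate_mul _ _ _ _ (by simp; omega), ← hblocks,
    det_submatrix_equiv_self, ← lead_eq_det_submatrix, ← lead_eq_det_submatrix, Fintype.card_fin,
    mul_comm]
end

section
/- LDU decomposition of the minor matrix: let A be an n×m matrix of rank r over a commutative domain R embedded in its fraction field, with α^i ≠ 0 for i = k, k+1, …, r. Then the minor matrix 𝒜^k_{s,p} (k < s ≤ n, k < p ≤ m) factors as L·D·U, where L = (α^j_{i,j}) with i = k+1…s, j = k+1…r is lower triangular of size (s−k)×(r−k), D = diag(α^k/(α^{i−1} α^i))_{i=k+1…r} is an (r−k)×(r−k) diagonal matrix over the fraction field, and U = (α^i_{i,j}) with i = k+1…r, j = k+1…p is upper triangular of size (r−k)×(p−k). -/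
open Matrix

namespace LDUAux

section DJ

variable {R : Type*} [CommRing R]


lemma det_updateColumn_single {N : ℕ} (A : Matrix (Fin (N+1)) (Fin (N+1)) R) (i j : Fin (N+1)) :
    det (A.updateCol j (Pi.single i 1)) =
      (-1) ^ ((i : ℕ) + (j : ℕ)) * det (A.submatrix i.succAbove j.succAbove) := by
  have hsub : ∀ i' : Fin (N+1),
      (A.updateCol j (Pi.single i 1)).submatrix (Fin.succAbove i') (Fin.succAbove j)
        = A.submatrix (Fin.succAbove i') (Fin.succAbove j) := by
    intro i'; ext a b
    simp [Matrix.submatrix_apply, Matrix.updateCol_ne (Fin.succAbove_ne j b)]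
  rw [det_succ_column _ j, Finset.sum_eq_single i]
  · rw [hsub, Matrix.updateCol_self, Pi.single_eq_same, mul_one]
  · intro b _ hb
    rw [Matrix.updateCol_self, Pi.single_eq_of_ne hb, mul_zero, zero_mul]
  · simp

lemma det_updateCol_eq_sum {N : ℕ} (A : Matrix (Fin (N+1)) (Fin (N+1)) R) (j : Fin (N+1))
    (w : Fin (N+1) → R) :
    det (A.updateCol j w) = ∑ i, w i * det (A.updateCol j (Pi.single i 1)) := by
  have hsub : ∀ i' : Fin (N+1),
      (A.updateCol j w).submatrix (Fin.succAbove i') (Fin.succAbove j)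
        = A.submatrix (Fin.succAbove i') (Fin.succAbove j) := by
    intro i'; ext a b
    simp [Matrix.submatrix_apply, Matrix.updateCol_ne (Fin.succAbove_ne j b)]
  rw [det_succ_column _ j]
  refine Finset.sum_congr rfl fun i _ => ?_
  rw [det_updateColumn_single, Matrix.updateCol_self, hsub]
  ring

omit [CommRing R] in
lemma myUpdateColumn_comm {n' : Type*} [DecidableEq n'] {m' : Type*}
    (M : Matrix m' n' R) {p q : n'} (hpq : p ≠ q) (u v : m' → R) :
    (M.updateCol p u).updateCol q v = (M.updateCol q v).updateCol p u := by
  ext a b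
  rcases eq_or_ne b q with rfl|hbq
  · rw [Matrix.updateCol_self, Matrix.updateCol_ne hpq.symm, Matrix.updateCol_self]
  · rw [Matrix.updateCol_ne hbq]
    rcases eq_or_ne b p with rfl|hbp
    · rw [Matrix.updateCol_self, Matrix.updateCol_self]
    · rw [Matrix.updateCol_ne hbp, Matrix.updateCol_ne hbp, Matrix.updateCol_ne hbq]

lemma det_double_single {N : ℕ} {p q : Fin (N+1)} (hpq : p ≠ q) (i j : Fin (N+1)) :
    det (((1 : Matrix (Fin (N+1)) (Fin (N+1)) R).updateCol p (Pi.single i 1)).updateCol q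
        (Pi.single j 1))
      = if i = p ∧ j = q then 1 else if i = q ∧ j = p then -1 else 0 := by
  set g : Fin (N+1) → Fin (N+1) := fun b => if b = p then i else if b = q then j else b with hg
  have hgp : g p = i := by simp [hg]
  have hgq : g q = j := by simp [hg, hpq.symm]
  have hgo : ∀ b, b ≠ p → b ≠ q → g b = b := by intro b h1 h2; simp [hg, h1, h2]
  have hE : (((1 : Matrix (Fin (N+1)) (Fin (N+1)) R).updateCol p (Pi.single i 1)).updateCol q
      (Pi.single j 1)) = ((1 : Matrix (Fin (N+1)) (Fin (N+1)) R).submatrix g id)ᵀ := by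
    ext a b
    rcases eq_or_ne b q with rfl|hbq
    · rw [Matrix.updateCol_self]
      simp [hgq, Matrix.one_apply, Pi.single_apply, eq_comm]
    · rw [Matrix.updateCol_ne hbq]
      rcases eq_or_ne b p with rfl|hbp
      · rw [Matrix.updateCol_self]
        simp [hgp, Matrix.one_apply, Pi.single_apply, eq_comm]
      · rw [Matrix.updateCol_ne hbp]
        simp [hgo b hbp hbq, Matrix.one_apply, eq_comm]
  rw [hE, det_transpose]
  by_cases h1 : i = p ∧ j = q
  · rw [if_pos h1]
    have : (1 : Matrix (Fin (N+1)) (Fin (N+1)) R).submatrix g id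
        = (1 : Matrix (Fin (N+1)) (Fin (N+1)) R) := by
      ext b a
      rcases eq_or_ne b p with rfl|hbp
      · rw [Matrix.submatrix_apply, hgp, h1.1, id]
      · rcases eq_or_ne b q with rfl|hbq
        · rw [Matrix.submatrix_apply, hgq, h1.2, id]
        · rw [Matrix.submatrix_apply, hgo b hbp hbq, id]
    rw [this, det_one]
  · rw [if_neg h1]
    by_cases h2 : i = q ∧ j = p
    · rw [if_pos h2]
      have hgswap : g = ⇑(Equiv.swap p q) := by
        funext b
        rcases eq_or_ne b p with rfl|hbp
        · rw [hgp, h2.1, Equiv.swap_apply_left]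
        · rcases eq_or_ne b q with rfl|hbq
          · rw [hgq, h2.2, Equiv.swap_apply_right]
          · rw [hgo b hbp hbq, Equiv.swap_apply_of_ne_of_ne hbp hbq]
      rw [hgswap, det_permute, det_one, Equiv.Perm.sign_swap hpq]
      simp
    · rw [if_neg h2]
      have hex : ∃ a b : Fin (N+1), a ≠ b ∧ g a = g b := by
        by_cases hij : i = j
        · exact ⟨p, q, hpq, by rw [hgp, hgq, hij]⟩
        · by_cases hi : i ≠ p ∧ i ≠ q
          · exact ⟨p, i, fun h => hi.1 h.symm, by rw [hgp, hgo i hi.1 hi.2]⟩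
          · have hj : j ≠ p ∧ j ≠ q := by
              push_neg at hi
              constructor
              · intro hjp
                rcases eq_or_ne i p with hip|hip
                · exact hij (hip.trans hjp.symm)
                · exact h2 ⟨hi hip, hjp⟩
              · intro hjq
                rcases eq_or_ne i p with hip|hip
                · exact h1 ⟨hip, hjq⟩
                · exact hij ((hi hip).trans hjq.symm)
            exact ⟨q, j, fun h => hj.2 h.symm, by rw [hgq, hgo j hj.1 hj.2]⟩
      obtain ⟨a, b, hab, hgab⟩ := hex
      refine det_zero_of_row_eq hab ?_
      funext c
      rw [Matrix.submatrix_apply, Matrix.submatrix_apply, hgab]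

lemma det_identity_two_columns {N : ℕ} {p q : Fin (N+1)} (hpq : p ≠ q) (u v : Fin (N+1) → R) :
    det (((1 : Matrix (Fin (N+1)) (Fin (N+1)) R).updateCol p u).updateCol q v)
      = u p * v q - u q * v p := by
  rw [det_updateCol_eq_sum]
  have hinner : ∀ j' : Fin (N+1),
      det (((1 : Matrix (Fin (N+1)) (Fin (N+1)) R).updateCol p u).updateCol q
        (Pi.single j' 1)) = (if j' = q then u p else 0) - (if j' = p then u q else 0) := by
    intro j'
    rw [myUpdateColumn_comm _ hpq, det_updateCol_eq_sum]
    have hc : ∀ i' : Fin (N+1),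
        u i' * det (((1 : Matrix (Fin (N+1)) (Fin (N+1)) R).updateCol q
            (Pi.single j' 1)).updateCol p (Pi.single i' 1))
        = u i' * (if i' = p ∧ j' = q then 1 else if i' = q ∧ j' = p then -1 else 0) := by
      intro i'
      rw [myUpdateColumn_comm _ hpq.symm, det_double_single hpq]
    rw [Finset.sum_congr rfl fun i' _ => hc i']
    rcases eq_or_ne j' q with hjq|hjq
    · rw [if_pos hjq, if_neg (by rw [hjq]; exact hpq.symm)]
      have hterm : ∀ i' : Fin (N+1),
          u i' * (if i' = p ∧ j' = q then (1:R) else if i' = q ∧ j' = p then -1 else 0)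
          = if i' = p then u p else 0 := by
        intro i'
        by_cases hip : i' = p
        · simp [hip, hjq]
        · simp [hip, hjq, hpq.symm]
      rw [Finset.sum_congr rfl fun i' _ => hterm i',
        Finset.sum_ite_eq' Finset.univ p fun _ => u p]
      simp
    · rw [if_neg hjq]
      rcases eq_or_ne j' p with hjp|hjp
      · rw [if_pos hjp]
        have hterm : ∀ i' : Fin (N+1),
            u i' * (if i' = p ∧ j' = q then (1:R) else if i' = q ∧ j' = p then -1 else 0)
            = if i' = q then -u q else 0 := by
          intro i'
          by_cases hiq : i' = q
          · simp [hiq, hjp, hjq, hpq, hpq.symm]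
          · simp [hiq, hjq]
        rw [Finset.sum_congr rfl fun i' _ => hterm i',
          Finset.sum_ite_eq' Finset.univ q fun _ => -u q]
        simp
      · rw [if_neg hjp]
        have hterm : ∀ i' : Fin (N+1),
            u i' * (if i' = p ∧ j' = q then (1:R) else if i' = q ∧ j' = p then -1 else 0)
            = 0 := by
          intro i'
          simp [hjq, hjp]
        rw [Finset.sum_congr rfl fun i' _ => hterm i']
        simp
  rw [Finset.sum_congr rfl fun j' _ => by rw [hinner j']]
  simp only [mul_sub, Finset.sum_sub_distrib, mul_ite, mul_zero]
  rw [Finset.sum_ite_eq' Finset.univ q fun j' => v j' * u p,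
    Finset.sum_ite_eq' Finset.univ p fun j' => v j' * u q]
  simp [mul_comm]

lemma dj_aux {N : ℕ} (M : Matrix (Fin (N+2)) (Fin (N+2)) R) {p q : Fin (N+2)} (p' : Fin (N+1))
    (hp : q.succAbove p' = p) :
    det M * (adjugate M p p * adjugate M q q - adjugate M q p * adjugate M p q)
      = det M * (det M *
          det (M.submatrix (q.succAbove ∘ p'.succAbove) (q.succAbove ∘ p'.succAbove))) := by
  have hpq : p ≠ q := hp ▸ Fin.succAbove_ne q p'
  have hiff : ∀ a : Fin (N+1), q.succAbove a = p ↔ a = p' := fun a => by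
    rw [← hp, (Fin.succAbove_right_injective (p := q)).eq_iff]
  set C : Matrix (Fin (N+2)) (Fin (N+2)) R :=
    ((1 : Matrix (Fin (N+2)) (Fin (N+2)) R).updateCol p
      (fun a => adjugate M a p)).updateCol q (fun a => adjugate M a q) with hC
  have hMC : M * C = (M.updateCol p (det M • (Pi.single p 1 : Fin (N+2) → R))).updateCol q
      (det M • (Pi.single q 1 : Fin (N+2) → R)) := by
    ext a b
    rw [Matrix.mul_apply]
    rcases eq_or_ne b q with rfl|hbq
    · rw [Matrix.updateCol_self]
      have : ∀ c, C c b = adjugate M c b := fun c => by rw [hC, Matrix.updateCol_self]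
      rw [Finset.sum_congr rfl fun c _ => by rw [this c]]
      have : ∑ c, M a c * adjugate M c b = (M * adjugate M) a b := (Matrix.mul_apply).symm
      rw [this, Matrix.mul_adjugate]
      simp [Matrix.one_apply, Pi.single_apply]
    · rw [Matrix.updateCol_ne hbq]
      rcases eq_or_ne b p with rfl|hbp
      · rw [Matrix.updateCol_self]
        have : ∀ c, C c b = adjugate M c b := fun c => by
          rw [hC, Matrix.updateCol_ne hbq, Matrix.updateCol_self]
        rw [Finset.sum_congr rfl fun c _ => by rw [this c]]
        have : ∑ c, M a c * adjugate M c b = (M * adjugate M) a b := (Matrix.mul_apply).symm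
        rw [this, Matrix.mul_adjugate]
        simp [Matrix.one_apply, Pi.single_apply]
      · rw [Matrix.updateCol_ne hbp]
        have : ∀ c, C c b = (1 : Matrix (Fin (N+2)) (Fin (N+2)) R) c b := fun c => by
          rw [hC, Matrix.updateCol_ne hbq, Matrix.updateCol_ne hbp]
        rw [Finset.sum_congr rfl fun c _ => by rw [this c]]
        have : ∑ c, M a c * (1 : Matrix (Fin (N+2)) (Fin (N+2)) R) c b
            = (M * (1 : Matrix (Fin (N+2)) (Fin (N+2)) R)) a b := (Matrix.mul_apply).symm
        rw [this, Matrix.mul_one]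
  have hdetC : det C = adjugate M p p * adjugate M q q - adjugate M q p * adjugate M p q := by
    rw [hC, det_identity_two_columns hpq]
  have hsub1 : (M.updateCol p (Pi.single p 1)).submatrix q.succAbove q.succAbove
      = (M.submatrix q.succAbove q.succAbove).updateCol p' (Pi.single p' 1) := by
    ext a b
    rw [Matrix.submatrix_apply, Matrix.updateCol_apply, Matrix.updateCol_apply]
    by_cases hb : b = p'
    · rw [if_pos ((hiff b).mpr hb), if_pos hb]
      simp [Pi.single_apply, hiff a, hb]
    · rw [if_neg (fun h => hb ((hiff b).mp h)), if_neg hb, Matrix.submatrix_apply]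
  have hkey : det ((M.updateCol p (Pi.single p 1)).updateCol q (Pi.single q 1))
      = det (M.submatrix (q.succAbove ∘ p'.succAbove) (q.succAbove ∘ p'.succAbove)) := by
    rw [det_updateColumn_single, hsub1, det_updateColumn_single, Matrix.submatrix_submatrix]
    have h1 : (-1 : R) ^ ((q : ℕ) + (q : ℕ)) = 1 := by
      rw [← two_mul, pow_mul]; norm_num
    have h2 : (-1 : R) ^ ((p' : ℕ) + (p' : ℕ)) = 1 := by
      rw [← two_mul, pow_mul]; norm_num
    rw [h1, h2, one_mul, one_mul]
  calc det M * (adjugate M p p * adjugate M q q - adjugate M q p * adjugate M p q)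
      = det M * det C := by rw [hdetC]
    _ = det (M * C) := (det_mul M C).symm
    _ = det ((M.updateCol p (det M • (Pi.single p 1 : Fin (N+2) → R))).updateCol q
        (det M • (Pi.single q 1 : Fin (N+2) → R))) := by rw [hMC]
    _ = det M * det ((M.updateCol p (det M • (Pi.single p 1 : Fin (N+2) → R))).updateCol q
        (Pi.single q 1)) := by rw [det_updateCol_smul]
    _ = det M * det ((M.updateCol q (Pi.single q 1)).updateCol p
        (det M • (Pi.single p 1 : Fin (N+2) → R))) := by rw [myUpdateColumn_comm _ hpq]
    _ = det M * (det M * det ((M.updateCol q (Pi.single q 1)).updateCol p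
        (Pi.single p 1))) := by rw [det_updateCol_smul]
    _ = det M * (det M * det ((M.updateCol p (Pi.single p 1)).updateCol q
        (Pi.single q 1))) := by rw [myUpdateColumn_comm _ hpq.symm]
    _ = det M * (det M *
        det (M.submatrix (q.succAbove ∘ p'.succAbove) (q.succAbove ∘ p'.succAbove))) := by
      rw [hkey]

lemma adjugate_eq_minor {N : ℕ} (M : Matrix (Fin (N+2)) (Fin (N+2)) R) (a b : Fin (N+2)) :
    adjugate M a b = (-1) ^ ((a : ℕ) + (b : ℕ)) * det (M.submatrix b.succAbove a.succAbove) := by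
  rw [adjugate_apply, ← det_transpose, ← Matrix.updateCol_transpose,
    det_updateColumn_single, ← Matrix.transpose_submatrix, det_transpose]

lemma dj {R : Type*} [CommRing R] [IsDomain R] {N : ℕ} (M : Matrix (Fin (N+2)) (Fin (N+2)) R)
    {p q : Fin (N+2)} (p' : Fin (N+1)) (hp : q.succAbove p' = p) :
    adjugate M p p * adjugate M q q - adjugate M q p * adjugate M p q
      = det M * det (M.submatrix (q.succAbove ∘ p'.succAbove) (q.succAbove ∘ p'.succAbove)) := by
  let S := MvPolynomial (Fin (N+2) × Fin (N+2)) R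
  let X : Matrix (Fin (N+2)) (Fin (N+2)) S := mvPolynomialX (Fin (N+2)) (Fin (N+2)) R
  have hX : adjugate X p p * adjugate X q q - adjugate X q p * adjugate X p q
      = det X * det (X.submatrix (q.succAbove ∘ p'.succAbove) (q.succAbove ∘ p'.succAbove)) :=
    mul_left_cancel₀ (det_mvPolynomialX_ne_zero _ _) (dj_aux X p' hp)
  set f : S →+* R := (MvPolynomial.eval fun pr : (Fin (N+2) × Fin (N+2)) => M pr.1 pr.2 : S →+* R)
    with hf
  have hmap : f.mapMatrix X = M := mvPolynomialX_mapMatrix_eval M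
  have hadj : ∀ a b, f (adjugate X a b) = adjugate M a b := by
    intro a b
    have h1 := RingHom.map_adjugate f X
    rw [hmap] at h1
    have := congrArg (fun Z => Z a b) h1
    simpa using this
  have hsubmap : ∀ (g1 g2 : Fin N → Fin (N+2)),
      f (det (X.submatrix g1 g2)) = det (M.submatrix g1 g2) := by
    intro g1 g2
    rw [RingHom.map_det]
    congr 1
    ext a b
    have := congrArg (fun Z => Z (g1 a) (g2 b)) hmap
    simpa using this
  have := congrArg f hX
  rw [_root_.map_sub, RingHom.map_mul, RingHom.map_mul, RingHom.map_mul, hadj, hadj, hadj, hadj,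
    RingHom.map_det, hmap, hsubmap] at this
  exact this

lemma dj' {R : Type*} [CommRing R] [IsDomain R] {N : ℕ} (M : Matrix (Fin (N+2)) (Fin (N+2)) R)
    {p q : Fin (N+2)} (p' : Fin (N+1)) (hp : q.succAbove p' = p) :
    det (M.submatrix p.succAbove p.succAbove) * det (M.submatrix q.succAbove q.succAbove)
      - det (M.submatrix p.succAbove q.succAbove) * det (M.submatrix q.succAbove p.succAbove)
      = det M * det (M.submatrix (q.succAbove ∘ p'.succAbove) (q.succAbove ∘ p'.succAbove)) := by
  have h := dj M p' hp
  rw [adjugate_eq_minor, adjugate_eq_minor, adjugate_eq_minor, adjugate_eq_minor] at h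
  have heven : ∀ c : ℕ, (-1 : R) ^ (c + c) = 1 := fun c => by rw [← two_mul, pow_mul]; norm_num
  have hsign : (-1 : R) ^ ((q : ℕ) + (p : ℕ)) * (-1 : R) ^ ((p : ℕ) + (q : ℕ)) = 1 := by
    rw [← pow_add, show (q : ℕ) + p + ((p : ℕ) + q) = 2 * ((p : ℕ) + q) by ring, pow_mul]
    norm_num
  rw [heven, heven, one_mul, one_mul] at h
  linear_combination h + (M.submatrix p.succAbove q.succAbove).det *
    (M.submatrix q.succAbove p.succAbove).det * hsign


end DJ

lemma submatrix_det_eq_zero {F : Type*} [Field F] {n m r : ℕ} (B : Matrix (Fin n) (Fin m) F)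
    (hr : B.rank = r) (f : Fin (r+1) → Fin n) (g : Fin (r+1) → Fin m) :
    det (Matrix.of fun a b => B (f a) (g b)) = 0 := by
  by_contra hdet
  set P : Matrix (Fin (r+1)) (Fin n) F := Matrix.of fun a c => if c = f a then (1:F) else 0
    with hP
  set Q : Matrix (Fin m) (Fin (r+1)) F := Matrix.of fun c b => if c = g b then (1:F) else 0
    with hQ
  have hPBQ : (Matrix.of fun a b => B (f a) (g b)) = P * B * Q := by
    ext a b
    rw [Matrix.mul_apply]
    rw [Finset.sum_eq_single (g b)]
    · rw [hQ]
      simp only [Matrix.of_apply, if_pos rfl, mul_one]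
      rw [Matrix.mul_apply, Finset.sum_eq_single (f a)]
      · simp [hP]
      · intro c _ hc
        rw [hP]
        simp only [Matrix.of_apply, if_neg hc, zero_mul]
      · simp
    · intro c _ hc
      rw [hQ]
      simp only [Matrix.of_apply, if_neg hc, mul_zero]
    · simp
  have hle : (Matrix.of fun a b => B (f a) (g b)).rank ≤ r := by
    have h2 : (P * B * Q).rank ≤ B.rank :=
      le_trans (Matrix.rank_mul_le_left _ _) (Matrix.rank_mul_le_right _ _)
    rw [hPBQ]
    omega
  have hu : IsUnit (Matrix.of fun a b => B (f a) (g b)) :=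
    (Matrix.isUnit_iff_isUnit_det _).mpr (isUnit_iff_ne_zero.mpr hdet)
  have hcard := Matrix.rank_of_isUnit _ hu
  rw [Fintype.card_fin] at hcard
  omega

lemma succAbove_val {K : ℕ} (x : Fin (K+1)) (a : Fin K) :
    ((x.succAbove a : Fin (K+1)) : ℕ) = if (a:ℕ) < (x:ℕ) then (a:ℕ) else (a:ℕ)+1 := by
  rcases lt_or_ge ((a:ℕ)) ((x:ℕ)) with hlt|hle
  · rw [Fin.succAbove_of_castSucc_lt _ _ (by simpa [Fin.lt_def] using hlt), if_pos hlt]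
    rfl
  · rw [Fin.succAbove_of_le_castSucc _ _ (by simpa [Fin.le_def] using hle),
      if_neg (not_lt.mpr hle)]
    rfl

lemma fin_A_congr {n m : ℕ} {α : Type*} (A : Matrix (Fin n) (Fin m) α) {r1 r2 : Fin n}
    {c1 c2 : Fin m} (hr : (r1:ℕ) = (r2:ℕ)) (hc : (c1:ℕ) = (c2:ℕ)) : A r1 c1 = A r2 c2 := by
  rw [show r1 = r2 from Fin.ext hr, show c1 = c2 from Fin.ext hc]


set_option maxHeartbeats 800000 in
lemma key {R : Type*} [CommRing R] [IsDomain R] {n m : ℕ} (A : Matrix (Fin n) (Fin m) R)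
    (N : ℕ) (hn : N + 1 ≤ n) (hm : N + 1 ≤ m) (i : Fin n) (j : Fin m) :
    mnr A (N+1) i j * lead A (N+1) - mnr A (N+2) i j * lead A N
      = mnr A (N+1) i ⟨N, by omega⟩ * mnr A (N+1) ⟨N, by omega⟩ j := by
  set q : Fin (N+2) := Fin.last (N+1) with hqdef
  set p' : Fin (N+1) := Fin.last N with hp'def
  set M : Matrix (Fin (N+2)) (Fin (N+2)) R := Matrix.of (fun a b : Fin (N+2) =>
    A (if h : (a:ℕ) < N+2-1 ∧ (a:ℕ) < n then ⟨(a:ℕ), h.2⟩ else i)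
      (if h : (b:ℕ) < N+2-1 ∧ (b:ℕ) < m then ⟨(b:ℕ), h.2⟩ else j)) with hMdef
  have hqa : ∀ a : Fin (N+1), ((q.succAbove a : Fin (N+2)) : ℕ) = (a:ℕ) := by
    intro a; rw [hqdef, Fin.succAbove_last]; simp
  have hpv : ((q.succAbove p' : Fin (N+2)) : ℕ) = N := by
    rw [hqa]; simp [hp'def]
  have hpa : ∀ a : Fin (N+1), (((q.succAbove p').succAbove a : Fin (N+2)) : ℕ)
      = if (a:ℕ) < N then (a:ℕ) else (a:ℕ)+1 := by
    intro a; rw [succAbove_val, hpv]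
  have hca : ∀ a : Fin N, (((q.succAbove ∘ p'.succAbove) a : Fin (N+2)) : ℕ) = (a:ℕ) := by
    intro a
    show ((q.succAbove (p'.succAbove a) : Fin (N+2)) : ℕ) = (a:ℕ)
    rw [hqa, hp'def, Fin.succAbove_last]; simp
  have h := dj' M (q := q) (p := q.succAbove p') p' rfl
  have e0 : det M = mnr A (N+2) i j := rfl
  have epp : det (M.submatrix (q.succAbove p').succAbove (q.succAbove p').succAbove)
      = mnr A (N+1) i j := by
    have hsub : M.submatrix (q.succAbove p').succAbove (q.succAbove p').succAbove
        = Matrix.of (fun a b : Fin (N+1) =>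
          A (if h : (a:ℕ) < N+1-1 ∧ (a:ℕ) < n then ⟨(a:ℕ), h.2⟩ else i)
            (if h : (b:ℕ) < N+1-1 ∧ (b:ℕ) < m then ⟨(b:ℕ), h.2⟩ else j)) := by
      ext a b
      simp only [Matrix.submatrix_apply, Matrix.of_apply, hMdef]
      have ha := a.isLt; have hb := b.isLt
      refine fin_A_congr A ?_ ?_ <;>
        · simp only [hpa, apply_dite (Fin.val : Fin n → ℕ),
              apply_dite (Fin.val : Fin m → ℕ), Fin.val_mk, dite_eq_ite]
          split_ifs <;> omega
    rw [hsub]; rfl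
  have epq : det (M.submatrix (q.succAbove p').succAbove q.succAbove)
      = mnr A (N+1) i ⟨N, by omega⟩ := by
    have hsub : M.submatrix (q.succAbove p').succAbove q.succAbove
        = Matrix.of (fun a b : Fin (N+1) =>
          A (if h : (a:ℕ) < N+1-1 ∧ (a:ℕ) < n then ⟨(a:ℕ), h.2⟩ else i)
            (if h : (b:ℕ) < N+1-1 ∧ (b:ℕ) < m then ⟨(b:ℕ), h.2⟩ else
              (⟨N, by omega⟩ : Fin m))) := by
      ext a b
      simp only [Matrix.submatrix_apply, Matrix.of_apply, hMdef]
      have ha := a.isLt; have hb := b.isLt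
      refine fin_A_congr A ?_ ?_ <;>
        · simp only [hpa, hqa, apply_dite (Fin.val : Fin n → ℕ),
              apply_dite (Fin.val : Fin m → ℕ), Fin.val_mk, dite_eq_ite]
          split_ifs <;> omega
    rw [hsub]; rfl
  have eqp : det (M.submatrix q.succAbove (q.succAbove p').succAbove)
      = mnr A (N+1) ⟨N, by omega⟩ j := by
    have hsub : M.submatrix q.succAbove (q.succAbove p').succAbove
        = Matrix.of (fun a b : Fin (N+1) =>
          A (if h : (a:ℕ) < N+1-1 ∧ (a:ℕ) < n then ⟨(a:ℕ), h.2⟩ else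
              (⟨N, by omega⟩ : Fin n))
            (if h : (b:ℕ) < N+1-1 ∧ (b:ℕ) < m then ⟨(b:ℕ), h.2⟩ else j)) := by
      ext a b
      simp only [Matrix.submatrix_apply, Matrix.of_apply, hMdef]
      have ha := a.isLt; have hb := b.isLt
      refine fin_A_congr A ?_ ?_ <;>
        · simp only [hpa, hqa, apply_dite (Fin.val : Fin n → ℕ),
              apply_dite (Fin.val : Fin m → ℕ), Fin.val_mk, dite_eq_ite]
          split_ifs <;> omega
    rw [hsub]; rfl
  have eqq : det (M.submatrix q.succAbove q.succAbove) = lead A (N+1) := by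
    rw [lead, dif_pos ⟨Nat.succ_pos N, hn, hm⟩]
    have hsub : M.submatrix q.succAbove q.succAbove
        = Matrix.of (fun a b : Fin (N+1) =>
          A (if h : (a:ℕ) < N+1-1 ∧ (a:ℕ) < n then ⟨(a:ℕ), h.2⟩ else
              (⟨N+1-1, by omega⟩ : Fin n))
            (if h : (b:ℕ) < N+1-1 ∧ (b:ℕ) < m then ⟨(b:ℕ), h.2⟩ else
              (⟨N+1-1, by omega⟩ : Fin m))) := by
      ext a b
      simp only [Matrix.submatrix_apply, Matrix.of_apply, hMdef]
      have ha := a.isLt; have hb := b.isLt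
      refine fin_A_congr A ?_ ?_ <;>
        · simp only [hqa, apply_dite (Fin.val : Fin n → ℕ),
              apply_dite (Fin.val : Fin m → ℕ), Fin.val_mk, dite_eq_ite]
          split_ifs <;> omega
    rw [hsub]; rfl
  have eint : det (M.submatrix (q.succAbove ∘ p'.succAbove) (q.succAbove ∘ p'.succAbove))
      = lead A N := by
    rcases Nat.eq_zero_or_pos N with rfl|hN
    · rw [lead, dif_neg (by simp)]
      exact Matrix.det_isEmpty
    · rw [lead, dif_pos ⟨hN, by omega, by omega⟩]
      have hsub : M.submatrix (q.succAbove ∘ p'.succAbove) (q.succAbove ∘ p'.succAbove)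
          = Matrix.of (fun a b : Fin N =>
            A (if h : (a:ℕ) < N-1 ∧ (a:ℕ) < n then ⟨(a:ℕ), h.2⟩ else
                (⟨N-1, by omega⟩ : Fin n))
              (if h : (b:ℕ) < N-1 ∧ (b:ℕ) < m then ⟨(b:ℕ), h.2⟩ else
                (⟨N-1, by omega⟩ : Fin m))) := by
        ext a b
        simp only [Matrix.submatrix_apply, Matrix.of_apply, hMdef]
        have ha := a.isLt; have hb := b.isLt
        refine fin_A_congr A ?_ ?_ <;>
          · simp only [hca, apply_dite (Fin.val : Fin n → ℕ),
                apply_dite (Fin.val : Fin m → ℕ), Fin.val_mk, dite_eq_ite]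
            split_ifs <;> omega
      rw [hsub]; rfl
  rw [epp, epq, eqp, eqq, e0, eint] at h
  linear_combination h

end LDUAux

set_option maxHeartbeats 1600000 in
/-- LDU decomposition of the minor matrix `𝒜^k_{s,p}` over the fraction field:
`𝒜^k_{s,p} = L·D·U` with `L = (α^j_{i,j})` lower triangular, `D` diagonal with
entries `α^k/(α^{i−1}α^i)`, and `U = (α^i_{i,j})` upper triangular. -/
theorem ldu_of_minor_matrix {R : Type*} [CommRing R] [IsDomain R] {n m : ℕ}
    (A : Matrix (Fin n) (Fin m) R) (r k s p : ℕ)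
    (hks : k < s) (hsn : s ≤ n) (hkp : k < p) (hpm : p ≤ m)
    (hkr : k ≤ r) (hrn : r ≤ n) (hrm : r ≤ m)
    (hrank : (A.map (algebraMap R (FractionRing R))).rank = r)
    (hα : ∀ i, k ≤ i → i ≤ r → lead A i ≠ 0) :
    ∃ (L : Matrix (Fin (s - k)) (Fin (r - k)) (FractionRing R))
      (D : Matrix (Fin (r - k)) (Fin (r - k)) (FractionRing R))
      (U : Matrix (Fin (r - k)) (Fin (p - k)) (FractionRing R)),
      (L = Matrix.of fun a b =>
          algebraMap R (FractionRing R)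
            (mnr A (k + b.val + 1) ⟨k + a.val, by omega⟩ ⟨k + b.val, by omega⟩)) ∧
      (D = Matrix.diagonal fun a =>
          algebraMap R (FractionRing R) (lead A k) /
            (algebraMap R (FractionRing R) (lead A (k + a.val)) *
              algebraMap R (FractionRing R) (lead A (k + a.val + 1)))) ∧
      (U = Matrix.of fun a b =>
          algebraMap R (FractionRing R)
            (mnr A (k + a.val + 1) ⟨k + a.val, by omega⟩ ⟨k + b.val, by omega⟩)) ∧
      (Matrix.of fun (a : Fin (s - k)) (b : Fin (p - k)) =>
          algebraMap R (FractionRing R)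
            (mnr A (k + 1) ⟨k + a.val, by omega⟩ ⟨k + b.val, by omega⟩)) = L * D * U ∧
      (∀ (a : Fin (s - k)) (b : Fin (r - k)), a.val < b.val → L a b = 0) ∧
      (∀ (a : Fin (r - k)) (b : Fin (p - k)), b.val < a.val → U a b = 0) := by
  classical
  open LDUAux in
  have hinj : Function.Injective (algebraMap R (FractionRing R)) :=
    IsFractionRing.injective R (FractionRing R)
  set φ := algebraMap R (FractionRing R) with hφ
  have hnz : ∀ x, k ≤ x → x ≤ r → φ (lead A x) ≠ 0 := by
    intro x h1 h2
    exact (map_ne_zero_iff φ hinj).mpr (hα x h1 h2)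
  refine ⟨_, _, _, rfl, rfl, rfl, ?_, ?_, ?_⟩
  · -- main equality
    ext a b
    rw [Matrix.mul_apply]
    simp only [Matrix.mul_diagonal, Matrix.of_apply]
    set G : ℕ → FractionRing R := fun c => φ (lead A k) *
        φ (mnr A (k + c + 1) (⟨k + a.val, by omega⟩ : Fin n) (⟨k + b.val, by omega⟩ : Fin m)) /
        φ (lead A (k + c)) with hG
    have hterm : ∀ c : Fin (r - k),
        φ (mnr A (k + c.val + 1) (⟨k + a.val, by omega⟩ : Fin n)
            (⟨k + c.val, by omega⟩ : Fin m)) *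
          (φ (lead A k) / (φ (lead A (k + c.val)) * φ (lead A (k + c.val + 1)))) *
          φ (mnr A (k + c.val + 1) (⟨k + c.val, by omega⟩ : Fin n)
            (⟨k + b.val, by omega⟩ : Fin m))
        = G c.val - G (c.val + 1) := by
      intro c
      have hc := c.isLt
      have h1 : φ (lead A (k + c.val)) ≠ 0 := hnz _ (by omega) (by omega)
      have h2 : φ (lead A (k + c.val + 1)) ≠ 0 := hnz _ (by omega) (by omega)
      have hkey := congrArg φ (LDUAux.key A (k + c.val) (by omega) (by omega)
        (⟨k + a.val, by omega⟩ : Fin n) (⟨k + b.val, by omega⟩ : Fin m))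
      rw [_root_.map_sub, RingHom.map_mul, RingHom.map_mul, RingHom.map_mul] at hkey
      rw [hG]
      simp only [← Nat.add_assoc, show k + (c : ℕ) + 1 + 1 = k + (c : ℕ) + 2 from rfl]
      field_simp
      linear_combination (-(φ (lead A k))) * hkey
    refine Eq.trans ?_ (Finset.sum_congr rfl fun c _ => (hterm c)).symm
    rw [Fin.sum_univ_eq_sum_range (fun c => G c - G (c + 1)) (r - k),
      Finset.sum_range_sub' G (r - k)]
    have hvanish : φ (mnr A (r + 1) (⟨k + a.val, by omega⟩ : Fin n)
        (⟨k + b.val, by omega⟩ : Fin m)) = 0 := by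
      set f : Fin (r+1) → Fin n := fun x =>
        if h : (x : ℕ) < r + 1 - 1 ∧ (x : ℕ) < n then ⟨(x : ℕ), h.2⟩
        else (⟨k + a.val, by omega⟩ : Fin n) with hf
      set g : Fin (r+1) → Fin m := fun x =>
        if h : (x : ℕ) < r + 1 - 1 ∧ (x : ℕ) < m then ⟨(x : ℕ), h.2⟩
        else (⟨k + b.val, by omega⟩ : Fin m) with hg
      have h0 : mnr A (r + 1) (⟨k + a.val, by omega⟩ : Fin n) (⟨k + b.val, by omega⟩ : Fin m)
          = det (Matrix.of fun x y => A (f x) (g y)) := rfl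
      rw [h0, RingHom.map_det]
      have h1 : φ.mapMatrix (Matrix.of fun x y => A (f x) (g y))
          = Matrix.of (fun x y => (A.map φ) (f x) (g y)) := by
        ext x y
        simp [Matrix.map_apply]
      rw [h1]
      exact LDUAux.submatrix_det_eq_zero (A.map φ) hrank f g
    have hG0 : G 0 = φ (mnr A (k + 1) (⟨k + a.val, by omega⟩ : Fin n)
        (⟨k + b.val, by omega⟩ : Fin m)) := by
      rw [hG]
      simp only [Nat.add_zero]
      exact mul_div_cancel_left₀ _ (hnz k le_rfl hkr)
    have hGend : G (r - k) = 0 := by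
      rw [hG]
      simp only [show k + (r - k) = r from by omega]
      rw [hvanish, mul_zero, zero_div]
    rw [hG0, hGend, sub_zero]
  · -- L lower triangular
    intro a b hab
    simp only [Matrix.of_apply]
    have hz : mnr A (k + b.val + 1) (⟨k + a.val, by omega⟩ : Fin n)
        (⟨k + b.val, by omega⟩ : Fin m) = 0 := by
      refine det_zero_of_row_eq (M := Matrix.of fun x y : Fin (k + b.val + 1) =>
        A (if h : (x : ℕ) < k + b.val + 1 - 1 ∧ (x : ℕ) < n then ⟨(x : ℕ), h.2⟩
            else (⟨k + a.val, by omega⟩ : Fin n))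
          (if h : (y : ℕ) < k + b.val + 1 - 1 ∧ (y : ℕ) < m then ⟨(y : ℕ), h.2⟩
            else (⟨k + b.val, by omega⟩ : Fin m)))
        (i := (⟨k + a.val, by omega⟩ : Fin (k + b.val + 1)))
        (j := (⟨k + b.val, by omega⟩ : Fin (k + b.val + 1)))
        (fun h => by
          have := congrArg Fin.val h
          simp only [Fin.val_mk] at this
          omega) ?_
      funext c
      show A _ _ = A _ _
      refine LDUAux.fin_A_congr A ?_ rfl
      rw [dif_pos ⟨by simp only [Fin.val_mk]; omega, by simp only [Fin.val_mk]; omega⟩,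
        dif_neg (by simp only [Fin.val_mk]; omega)]
    rw [hz, map_zero]
  · -- U upper triangular
    intro a b hab
    simp only [Matrix.of_apply]
    have hz : mnr A (k + a.val + 1) (⟨k + a.val, by omega⟩ : Fin n)
        (⟨k + b.val, by omega⟩ : Fin m) = 0 := by
      refine det_zero_of_column_eq (M := Matrix.of fun x y : Fin (k + a.val + 1) =>
        A (if h : (x : ℕ) < k + a.val + 1 - 1 ∧ (x : ℕ) < n then ⟨(x : ℕ), h.2⟩
            else (⟨k + a.val, by omega⟩ : Fin n))
          (if h : (y : ℕ) < k + a.val + 1 - 1 ∧ (y : ℕ) < m then ⟨(y : ℕ), h.2⟩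
            else (⟨k + b.val, by omega⟩ : Fin m)))
        (i := (⟨k + b.val, by omega⟩ : Fin (k + a.val + 1)))
        (j := (⟨k + a.val, by omega⟩ : Fin (k + a.val + 1)))
        (fun h => by
          have := congrArg Fin.val h
          simp only [Fin.val_mk] at this
          omega) ?_
      intro c
      show A _ _ = A _ _
      refine LDUAux.fin_A_congr A rfl ?_
      rw [dif_pos ⟨by simp only [Fin.val_mk]; omega, by simp only [Fin.val_mk]; omega⟩,
        dif_neg (by simp only [Fin.val_mk]; omega)]
    rw [hz, map_zero]
end

section
/- Vanishing of a row of the minor matrix propagates to higher minors: if for some fixed i all minors α^{k+1}_{i,j} = 0 for j = k+1,…,r, and α^k ≠ 0, then α^j_{i,j} = 0 for all j with k+1 ≤ j ≤ r, j ≤ i. -/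
/-!
Since `α^k ≠ 0`, the row `i` of `A` is a combination of its first `k` rows on the first `k`
columns, and the vanishing of the bordered minors `α^{k+1}_{i,j}` says that the same relation holds
on every column `j ≤ r`. A minor `α^j_{i,j}` with `k < j` contains these `k + 1` rows and only
columns `≤ r`, hence vanishes. Instead of solving for the coefficients in the fraction field, take
the cofactors of the bordered matrix along its last column: they do not involve that column, and
the last of them is `α^k ≠ 0`.
-/

open Matrix

theorem Fin.exists_injective_snoc_comp {α : Type*} {k l : ℕ} (hkl : k ≤ l) (v : Fin l → α)
    (x : α) : ∃ e : Fin (k + 1) → Fin (l + 1), Function.Injective e ∧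
      ∀ t, (Fin.snoc v x : Fin (l + 1) → α) (e t) =
        (Fin.snoc (v ∘ Fin.castLE hkl) x : Fin (k + 1) → α) t := by
  refine ⟨Fin.snoc (Fin.castSucc ∘ Fin.castLE hkl) (Fin.last l),
    Fin.snoc_injective_of_injective ((Fin.castSucc_injective l).comp (Fin.castLE_injective hkl))
      (by rintro ⟨t, ht⟩; exact Fin.castSucc_ne_last _ ht), fun t => ?_⟩
  induction t using Fin.lastCases <;>
    simp only [Fin.snoc_last, Fin.snoc_castSucc, Function.comp_apply]

namespace Matrix

variable {R ι κ : Type*} [CommRing R] (A : Matrix ι κ R)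

theorem det_submatrix_eq_zero_of_rows_relation [IsDomain R] {μ ν : Type*} [Fintype μ]
    [Fintype ν] [DecidableEq ν] (f : ν → ι) (g : ν → κ) {e : μ → ν}
    (he : Function.Injective e) {w : μ → R} (hw : w ≠ 0)
    (hrel : ∀ b, ∑ t, w t * A (f (e t)) (g b) = 0) : (A.submatrix f g).det = 0 := by
  refine det_eq_zero_of_not_linearIndependent_rows fun hli => hw ?_
  funext t
  refine Fintype.linearIndependent_iff.1 (hli.comp e he) w (funext fun b => ?_) t
  simpa only [Function.comp_apply, Finset.sum_apply, Pi.smul_apply, submatrix_apply,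
    smul_eq_mul, Pi.zero_apply] using hrel b

variable {k : ℕ} (p : Fin k → ι) (i : ι) (q : Fin k → κ)

def borderCofactor (t : Fin (k + 1)) : R :=
  (-1) ^ (t + k : ℕ) * (A.submatrix ((Fin.snoc p i : Fin (k + 1) → ι) ∘ t.succAbove) q).det

theorem det_submatrix_snoc_snoc (c : κ) :
    (A.submatrix (Fin.snoc p i) (Fin.snoc q c)).det =
      ∑ t, borderCofactor A p i q t * A ((Fin.snoc p i : Fin (k + 1) → ι) t) c := by
  rw [det_succ_column _ (Fin.last k)]
  refine Finset.sum_congr rfl fun t _ => ?_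
  simp only [borderCofactor, Fin.val_last, submatrix_apply, Fin.snoc_last, Fin.succAbove_last,
    submatrix_submatrix, Fin.snoc_comp_castSucc]
  ring

theorem borderCofactor_last : borderCofactor A p i q (Fin.last k) = (A.submatrix p q).det := by
  simp [borderCofactor, Fin.succAbove_last, ← two_mul]

end Matrix

section Minors

variable {R : Type*} [CommRing R] {n m : ℕ} (A : Matrix (Fin n) (Fin m) R)

theorem mnr_succ_s8 {l : ℕ} (hln : l ≤ n) (hlm : l ≤ m) (i : Fin n) (j : Fin m) :
    mnr A (l + 1) i j =
      (A.submatrix (Fin.snoc (Fin.castLE hln) i) (Fin.snoc (Fin.castLE hlm) j)).det := by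
  have hn (a : Fin l) : a.val < n := a.2.trans_le hln
  have hm (b : Fin l) : b.val < m := b.2.trans_le hlm
  rw [mnr]
  congr 1
  ext a b
  induction a using Fin.lastCases <;> induction b using Fin.lastCases <;>
    simp [Fin.castLE, hn, hm]

theorem lead_eq_det {k : ℕ} (hkn : k ≤ n) (hkm : k ≤ m) :
    lead A k = (A.submatrix (Fin.castLE hkn) (Fin.castLE hkm)).det := by
  rw [lead]
  split_ifs with h
  · rw [mnr]
    congr 1
    ext a b
    simp only [of_apply, submatrix_apply]
    congr 1 <;> split_ifs <;> ext <;> simp only [Fin.val_castLE] <;> omega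
  · obtain rfl : k = 0 := by omega
    simp

theorem mnr_succ_eq_zero_of_lt {k : ℕ} (i : Fin n) {c : Fin m} (hc : c.val < k) :
    mnr A (k + 1) i c = 0 :=
  det_zero_of_column_eq (i := ⟨c, by omega⟩) (j := Fin.last k) (Fin.ne_of_lt hc)
    fun a => by simp [hc]

end Minors

/-- Vanishing of a row of the minor matrix propagates to higher minors:
if `α^{k+1}_{i,j} = 0` for `j = k+1,…,r` and `α^k ≠ 0`, then `α^j_{i,j} = 0`
for all `j` with `k+1 ≤ j ≤ r`, `j ≤ i`. -/
theorem zero_row_propagates {R : Type*} [CommRing R] [IsDomain R] {n m : ℕ}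
    (A : Matrix (Fin n) (Fin m) R) (k r i : ℕ)
    (hin : i ≤ n) (hrn : r ≤ n) (hrm : r ≤ m)
    (hk : lead A k ≠ 0)
    (hrow : ∀ (j : ℕ) (h1 : k + 1 ≤ j) (h2 : j ≤ r),
      mnr A (k + 1) ⟨i - 1, by omega⟩ ⟨j - 1, by omega⟩ = 0) :
    ∀ (j : ℕ) (h1 : k + 1 ≤ j) (h2 : j ≤ r) (h3 : j ≤ i),
      mnr A j ⟨i - 1, by omega⟩ ⟨j - 1, by omega⟩ = 0 := by
  intro j h1 h2 _
  obtain ⟨l, rfl⟩ : ∃ l, j = l + 1 := ⟨j - 1, by omega⟩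
  have hkn : k ≤ n := by omega
  have hkm : k ≤ m := by omega
  set i' : Fin n := ⟨i - 1, by omega⟩
  have hcol (c : Fin m) (hc : c.val < r) : mnr A (k + 1) i' c = 0 := by
    by_cases hck : c.val < k
    · exact mnr_succ_eq_zero_of_lt A i' hck
    · simpa only [add_tsub_cancel_right, Fin.eta] using hrow (c + 1) (by omega) (by omega)
  obtain ⟨e, he, hfe⟩ :=
    Fin.exists_injective_snoc_comp (by omega : k ≤ l) (Fin.castLE (by omega : l ≤ n)) i'
  rw [mnr_succ_s8 A (by omega) (by omega)]
  refine det_submatrix_eq_zero_of_rows_relation A _ _ he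
    (w := borderCofactor A (Fin.castLE hkn) i' (Fin.castLE hkm)) ?_ fun b => ?_
  · intro hw
    exact hk (by rw [lead_eq_det A hkn hkm, ← borderCofactor_last, hw, Pi.zero_apply])
  · rw [Fin.castLE_comp_castLE] at hfe
    simp only [hfe, ← det_submatrix_snoc_snoc, ← mnr_succ_s8 A hkn hkm]
    refine hcol _ ?_
    induction b using Fin.lastCases <;>
      simp only [add_tsub_cancel_right, Fin.snoc_last, Fin.snoc_castSucc, Fin.val_castLE] <;> omega
end

section
/- Recursive step correctness: let A be an n×n matrix over a field partitioned as [[A₁, B], [C, D₀]] with A₁ of size s×s invertible with factorization A₁ = L₁·D₁·U₁ (L₁ lower, U₁ upper triangular, D₁ diagonal, all invertible). Define Ũ = (L₁·D₁)^{−1}·B, L̃ = C·(D₁·U₁)^{−1}, and A₂ = D₀ − L̃·D₁·Ũ. If A₂ = L₂·D₂·U₂ with L₂ lower, U₂ upper triangular, D₂ diagonal, then A = [[L₁, 0], [L̃, L₂]] · diag(D₁, D₂) · [[U₁, Ũ], [0, U₂]]. -/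
open Matrix

/-- Recursive step correctness of the LDU algorithm: from a factorization of the
upper-left block and of the Schur complement one obtains a block LDU
factorization of the whole matrix. -/
theorem ldu_recursive_step {F : Type*} [Field F] {s t : ℕ}
    (A₁ L₁ D₁ U₁ : Matrix (Fin s) (Fin s) F)
    (B : Matrix (Fin s) (Fin t) F) (C : Matrix (Fin t) (Fin s) F)
    (D₀ L₂ D₂ U₂ : Matrix (Fin t) (Fin t) F)
    (hA₁ : A₁ = L₁ * D₁ * U₁)
    (hL₁ : ∀ i j : Fin s, i < j → L₁ i j = 0) (hL₁u : IsUnit L₁.det)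
    (hU₁ : ∀ i j : Fin s, j < i → U₁ i j = 0) (hU₁u : IsUnit U₁.det)
    (hD₁ : ∀ i j : Fin s, i ≠ j → D₁ i j = 0) (hD₁u : IsUnit D₁.det)
    (Ut : Matrix (Fin s) (Fin t) F) (hUt : Ut = (L₁ * D₁)⁻¹ * B)
    (Lt : Matrix (Fin t) (Fin s) F) (hLt : Lt = C * (D₁ * U₁)⁻¹)
    (A₂ : Matrix (Fin t) (Fin t) F) (hA₂ : A₂ = D₀ - Lt * D₁ * Ut)
    (hA₂f : A₂ = L₂ * D₂ * U₂)
    (hL₂ : ∀ i j : Fin t, i < j → L₂ i j = 0)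
    (hU₂ : ∀ i j : Fin t, j < i → U₂ i j = 0)
    (hD₂ : ∀ i j : Fin t, i ≠ j → D₂ i j = 0) :
    Matrix.fromBlocks A₁ B C D₀ =
      Matrix.fromBlocks L₁ 0 Lt L₂ * Matrix.fromBlocks D₁ 0 0 D₂ *
        Matrix.fromBlocks U₁ Ut 0 U₂ := by
  have hLD : IsUnit (L₁ * D₁).det := by rw [Matrix.det_mul]; exact hL₁u.mul hD₁u
  have hDU : IsUnit (D₁ * U₁).det := by rw [Matrix.det_mul]; exact hD₁u.mul hU₁u
  have h1 : L₁ * D₁ * Ut = B := by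
    rw [hUt, ← Matrix.mul_assoc, Matrix.mul_nonsing_inv _ hLD, Matrix.one_mul]
  have h2 : Lt * (D₁ * U₁) = C := by
    rw [hLt, Matrix.mul_assoc, Matrix.nonsing_inv_mul _ hDU, Matrix.mul_one]
  have h3 : D₀ = Lt * D₁ * Ut + L₂ * D₂ * U₂ := by
    rw [← hA₂f, hA₂]; abel
  rw [Matrix.fromBlocks_multiply, Matrix.fromBlocks_multiply]
  rw [← Matrix.mul_assoc] at h2
  simp only [Matrix.mul_assoc] at h3
  simp [hA₁, h1, h2, ← h3, Matrix.mul_assoc]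
end
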